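/- arXiv:2511.13579 — 4 statements merged into one kernel-verified Lean document; each statement's English description precedes it below -/
import Mathlib

section
/- Let (b_λ)_{λ≥1} be nondecreasing with b_λ ≥ 1 and (a_λ) strictly increasing naturals with a_λ ≥ 2 and a_{λ+1} ≥ e^{b_λ} a_λ + 1. Define q_k = b_λ^k for a_λ ≤ k < a_{λ+1} (and q_k = 1 for k < a_1) and Q_k = k! · q_k. Then Σ_{k=1}^∞ 1/(Q_k)^{1/k} = ∞. -/
/-!
Since `k! ≤ k ^ k`, on the block `a λ ≤ k < a (λ + 1)` the term `1 / (k! · b λ ^ k) ^ (1 / k)` is at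
least `1 / (k · b λ)`. Comparing with `∫ dx / x`, the harmonic sum over the block is at least
`log (a (λ + 1) / a λ) ≥ b λ`, so every block contributes at least `1`, which is incompatible with
the Cauchy criterion.
-/

open Filter Real Topology

theorem log_div_le_sum_Ico_inv {m n : ℕ} (hm : 0 < m) (hmn : m ≤ n) :
    log (n / m) ≤ ∑ k ∈ Finset.Ico m n, (k : ℝ)⁻¹ := by
  have hm' : (0 : ℝ) < m := Nat.cast_pos.2 hm
  have hzero : (0 : ℝ) ∉ Set.uIcc (m : ℝ) n := by
    rw [Set.uIcc_of_le (Nat.cast_le.2 hmn)]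
    exact fun h => hm'.not_ge h.1
  rw [← integral_inv hzero]
  exact (inv_antitoneOn_Icc_right hm').integral_le_sum_Ico hmn

theorem one_le_sum_Ico_inv_mul_of_exp_mul_le {m n : ℕ} {c : ℝ} (hm : 0 < m) (hc : 0 < c)
    (h : exp c * m ≤ n) : 1 ≤ ∑ k ∈ Finset.Ico m n, ((k : ℝ) * c)⁻¹ := by
  have hm' : (0 : ℝ) < m := Nat.cast_pos.2 hm
  have hmn : (m : ℝ) ≤ n := (le_mul_of_one_le_left hm'.le (one_le_exp hc.le)).trans h
  have hlog : c ≤ log (n / m) :=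
    (le_log_iff_exp_le (div_pos (hm'.trans_le hmn) hm')).2 ((le_div_iff₀ hm').2 h)
  calc 1 = c * c⁻¹ := (mul_inv_cancel₀ hc.ne').symm
    _ ≤ (∑ k ∈ Finset.Ico m n, (k : ℝ)⁻¹) * c⁻¹ := by
      gcongr
      exact hlog.trans (log_div_le_sum_Ico_inv hm (Nat.cast_le.1 hmn))
    _ = ∑ k ∈ Finset.Ico m n, ((k : ℝ) * c)⁻¹ := by simp only [Finset.sum_mul, mul_inv]

theorem rpow_factorial_mul_pow_le {k : ℕ} {c : ℝ} (hk : k ≠ 0) (hc : 0 ≤ c) :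
    ((k.factorial : ℝ) * c ^ k) ^ (1 / (k : ℝ)) ≤ k * c := by
  calc ((k.factorial : ℝ) * c ^ k) ^ (1 / (k : ℝ)) ≤ ((k * c) ^ k) ^ (1 / (k : ℝ)) := by
        gcongr
        rw [mul_pow]
        gcongr
        exact_mod_cast k.factorial_le_pow
    _ = k * c := by rw [one_div, pow_rpow_inv_natCast (by positivity) hk]

theorem not_summable_of_le_sum_Ico {f : ℕ → ℝ} {a : ℕ → ℕ} {ε : ℝ} (hε : 0 < ε)
    (ha : Tendsto a atTop atTop) (h : ∀ᶠ l in atTop, ε ≤ ∑ k ∈ Finset.Ico (a l) (a (l + 1)), f k) :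
    ¬ Summable f := by
  intro hf
  have hS := hf.tendsto_sum_tsum_nat
  have hblock : Tendsto (fun l => ∑ k ∈ Finset.range (a (l + 1)), f k -
      ∑ k ∈ Finset.range (a l), f k) atTop (𝓝 0) := by
    simpa using (hS.comp ((tendsto_add_atTop_iff_nat 1).2 ha)).sub (hS.comp ha)
  obtain ⟨l, hl, hsmall⟩ := (h.and (hblock.eventually (gt_mem_nhds hε))).exists
  have hle : a l ≤ a (l + 1) := by
    by_contra hlt
    rw [Finset.Ico_eq_empty_of_le (not_le.1 hlt).le, Finset.sum_empty] at hl
    exact hε.not_ge hl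
  rw [Finset.sum_Ico_eq_sub _ hle] at hl
  exact hsmall.not_ge hl

theorem stmt8_general (b : ℕ → ℝ) (a : ℕ → ℕ) (q : ℕ → ℝ)
    (hb1 : ∀ lam : ℕ, 1 ≤ lam → 1 ≤ b lam)
    (hgrow : ∀ lam : ℕ, 1 ≤ lam → Real.exp (b lam) * (a lam : ℝ) + 1 ≤ (a (lam + 1) : ℝ))
    (hq : ∀ lam : ℕ, 1 ≤ lam → ∀ k : ℕ, a lam ≤ k → k < a (lam + 1) → q k = (b lam) ^ k) :
    ¬ Summable (fun k : ℕ => 1 / ((k.factorial : ℝ) * q k) ^ ((1 : ℝ) / (k : ℝ))) := by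
  have hb_pos : ∀ l, 1 ≤ l → 0 < b l := fun l hl => one_pos.trans_le (hb1 l hl)
  have ha_lt : ∀ l, 1 ≤ l → a l < a (l + 1) := fun l hl => by
    have : (a l : ℝ) ≤ exp (b l) * a l :=
      le_mul_of_one_le_left (Nat.cast_nonneg _) (one_le_exp (hb_pos l hl).le)
    exact_mod_cast (by linarith [hgrow l hl] : (a l : ℝ) < a (l + 1))
  have ha_ge : ∀ n, n ≤ a (n + 1) := fun n => by
    induction n with
    | zero => omega
    | succ n ih => have := ha_lt (n + 1) (by omega); omega
  refine not_summable_of_le_sum_Ico one_pos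
    ((tendsto_add_atTop_iff_nat 1).1 (tendsto_atTop_mono ha_ge tendsto_id))
    (eventually_atTop.2 ⟨2, fun l hl => ?_⟩)
  obtain ⟨m, rfl⟩ : ∃ m, l = m + 1 := ⟨l - 1, by omega⟩
  have hb : 0 < b (m + 1) := hb_pos _ (by omega)
  have ha_pos : 0 < a (m + 1) := (Nat.zero_le _).trans_lt (ha_lt m (by omega))
  refine (one_le_sum_Ico_inv_mul_of_exp_mul_le ha_pos hb
    (by linarith [hgrow (m + 1) (by omega)])).trans (Finset.sum_le_sum fun k hk => ?_)
  obtain ⟨hk1, hk2⟩ := Finset.mem_Ico.1 hk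
  rw [hq (m + 1) (by omega) k hk1 hk2, one_div]
  exact inv_anti₀ (rpow_pos_of_pos (by positivity) _)
    (rpow_factorial_mul_pow_le (by omega) hb.le)

/-- Quasianalyticity of the constructed weight sequence `Q k = k! · q k`:
the series `Σ 1/(Q k)^{1/k}` diverges. -/
theorem stmt8 (b : ℕ → ℝ) (a : ℕ → ℕ) (q : ℕ → ℝ)
    (hb1 : ∀ lam : ℕ, 1 ≤ lam → 1 ≤ b lam)
    (hbmono : ∀ l1 l2 : ℕ, 1 ≤ l1 → l1 ≤ l2 → b l1 ≤ b l2)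
    (ha2 : ∀ lam : ℕ, 1 ≤ lam → 2 ≤ a lam)
    (hamono : ∀ lam : ℕ, 1 ≤ lam → a lam < a (lam + 1))
    (hgrow : ∀ lam : ℕ, 1 ≤ lam → Real.exp (b lam) * (a lam : ℝ) + 1 ≤ (a (lam + 1) : ℝ))
    (hq0 : ∀ k : ℕ, k < a 1 → q k = 1)
    (hq : ∀ lam : ℕ, 1 ≤ lam → ∀ k : ℕ, a lam ≤ k → k < a (lam + 1) → q k = (b lam) ^ k) :
    ¬ Summable (fun k : ℕ => 1 / ((k.factorial : ℝ) * q k) ^ ((1 : ℝ) / (k : ℝ))) :=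
  stmt8_general b a q hb1 hgrow hq
end

section
/- Let M^{(λ)} (λ ∈ ℕ) be a family of positive sequences with sup_k (M_k^{(λ)})^{1/k} = ∞ for each λ, and M_k^{(λ₁)} ≤ M_k^{(λ₂)} for λ₁ ≤ λ₂ and all k. Define iteratively a_λ so that b_λ := (M_{a_λ}^{(λ)})^{2/a_λ} is nondecreasing and ≥ λ², and set Q_k = k! b_λ^k for a_λ ≤ k < a_{λ+1}. Then for every λ ∈ ℕ one has sup_{k} (Q_k / M_k^{(λ)})^{1/k} = ∞. More precisely, for every ν ≥ λ, (Q_{a_ν}/M_{a_ν}^{(λ)})^{1/a_ν} ≥ ν. -/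
/-! With `y = (M^{(ν)}_{a_ν})^{1/a_ν}` one has `b_ν = y²`, hence `Q_{a_ν} ≥ y^{2 a_ν}`, while
monotonicity in `λ` gives `M^{(λ)}_{a_ν} ≤ y^{a_ν}`. So `(Q_{a_ν} / M^{(λ)}_{a_ν})^{1/a_ν} ≥ y`,
and `y ≥ ν` because `y² = b_ν ≥ ν²`. -/

open Nat

lemma Real.rpow_two_div_eq_sq {x : ℝ} (hx : 0 ≤ x) (n : ℝ) :
    x ^ (2 / n) = (x ^ (1 / n)) ^ 2 := by
  rw [← Real.rpow_natCast, ← Real.rpow_mul hx]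
  ring_nf

lemma le_rpow_one_div_factorial_mul_sq_pow_div {y m : ℝ} {n : ℕ} (hn : n ≠ 0) (hy : 0 ≤ y)
    (hm : 0 < m) (hmy : m ≤ y ^ n) :
    y ≤ (n ! * (y ^ 2) ^ n / m) ^ (1 / n : ℝ) := by
  have hyn : y ^ n ≤ n ! * (y ^ 2) ^ n / m := by
    have hfact : (1 : ℝ) ≤ n ! := by exact_mod_cast n.factorial_pos
    rw [le_div_iff₀ hm, ← pow_mul, mul_comm 2, pow_mul]
    nlinarith [pow_nonneg hy n]
  calc y = (y ^ n) ^ (1 / n : ℝ) := by rw [one_div, Real.pow_rpow_inv_natCast hy hn]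
    _ ≤ _ := Real.rpow_le_rpow (pow_nonneg hy n) hyn (by positivity)

lemma not_bddAbove_range_of_natCast_le (f : ℕ → ℝ) (g : ℕ → ℕ) (lam : ℕ)
    (h : ∀ nu, lam ≤ nu → (nu : ℝ) ≤ f (g nu)) : ¬ BddAbove (Set.range f) := by
  rw [not_bddAbove_iff]
  intro c
  obtain ⟨nu, hc⟩ := exists_nat_gt c
  refine ⟨f (g (max lam nu)), ⟨_, rfl⟩, ?_⟩
  calc c < nu := hc
    _ ≤ (max lam nu : ℕ) := by exact_mod_cast le_max_right lam nu
    _ ≤ f (g (max lam nu)) := h _ (le_max_left lam nu)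

theorem stmt9_general (M : ℕ → ℕ → ℝ) (a : ℕ → ℕ) (b : ℕ → ℝ) (Q : ℕ → ℝ)
    (hMpos : ∀ lam k : ℕ, 0 < M lam k)
    (hMmono : ∀ l1 l2 k : ℕ, l1 ≤ l2 → M l1 k ≤ M l2 k)
    (ha1 : ∀ lam : ℕ, 1 ≤ lam → 1 ≤ a lam)
    (hamono : ∀ lam : ℕ, 1 ≤ lam → a lam < a (lam + 1))
    (hb : ∀ lam : ℕ, 1 ≤ lam → b lam = (M lam (a lam)) ^ ((2 : ℝ) / (a lam : ℝ)))
    (hbsq : ∀ lam : ℕ, 1 ≤ lam → (lam : ℝ) ^ 2 ≤ b lam)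
    (hQ : ∀ lam : ℕ, 1 ≤ lam → ∀ k : ℕ, a lam ≤ k → k < a (lam + 1) →
      Q k = (k.factorial : ℝ) * (b lam) ^ k) :
    (∀ lam nu : ℕ, 1 ≤ lam → lam ≤ nu →
      (nu : ℝ) ≤ (Q (a nu) / M lam (a nu)) ^ ((1 : ℝ) / (a nu : ℝ))) ∧
    (∀ lam : ℕ, 1 ≤ lam →
      ¬ BddAbove (Set.range fun k : ℕ => (Q k / M lam k) ^ ((1 : ℝ) / (k : ℝ)))) := by
  have key : ∀ lam nu : ℕ, 1 ≤ lam → lam ≤ nu →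
      (nu : ℝ) ≤ (Q (a nu) / M lam (a nu)) ^ ((1 : ℝ) / (a nu : ℝ)) := by
    intro lam nu hlam hle
    have hnu : 1 ≤ nu := hlam.trans hle
    have hn : a nu ≠ 0 := Nat.one_le_iff_ne_zero.1 (ha1 nu hnu)
    set y := M nu (a nu) ^ ((1 : ℝ) / (a nu : ℝ))
    have hy : 0 ≤ y := Real.rpow_nonneg (hMpos nu _).le _
    have hb_eq : b nu = y ^ 2 := (hb nu hnu).trans (Real.rpow_two_div_eq_sq (hMpos nu _).le _)
    have hQ_eq : Q (a nu) = (a nu)! * (y ^ 2) ^ a nu := hb_eq ▸ hQ nu hnu _ le_rfl (hamono nu hnu)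
    have hy_pow : y ^ a nu = M nu (a nu) := by
      simp only [y, one_div]
      exact Real.rpow_inv_natCast_pow (hMpos nu _).le hn
    have hM_le : M lam (a nu) ≤ y ^ a nu := hy_pow ▸ hMmono lam nu _ hle
    have hnu_le : (nu : ℝ) ≤ y :=
      (pow_le_pow_iff_left₀ (by positivity) hy two_ne_zero).1 (hb_eq ▸ hbsq nu hnu)
    rw [hQ_eq]
    exact hnu_le.trans (le_rpow_one_div_factorial_mul_sq_pow_div hn hy (hMpos lam _) hM_le)
  refine ⟨key, fun lam hlam => ?_⟩
  exact not_bddAbove_range_of_natCast_le _ a lam (key lam · hlam)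

/-- The constructed sequence `Q` is transversal to each member of the family `M`:
`(Q (a ν) / M λ (a ν))^{1/a ν} ≥ ν` for `ν ≥ λ`, so `sup_k (Q k / M λ k)^{1/k} = ∞`. -/
theorem stmt9 (M : ℕ → ℕ → ℝ) (a : ℕ → ℕ) (b : ℕ → ℝ) (Q : ℕ → ℝ)
    (hMpos : ∀ lam k : ℕ, 0 < M lam k)
    (hMsup : ∀ lam : ℕ, ¬ BddAbove (Set.range fun k : ℕ => (M lam k) ^ ((1 : ℝ) / (k : ℝ))))
    (hMmono : ∀ l1 l2 k : ℕ, l1 ≤ l2 → M l1 k ≤ M l2 k)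
    (ha1 : ∀ lam : ℕ, 1 ≤ lam → 1 ≤ a lam)
    (hamono : ∀ lam : ℕ, 1 ≤ lam → a lam < a (lam + 1))
    (hb : ∀ lam : ℕ, 1 ≤ lam → b lam = (M lam (a lam)) ^ ((2 : ℝ) / (a lam : ℝ)))
    (hbmono : ∀ l1 l2 : ℕ, 1 ≤ l1 → l1 ≤ l2 → b l1 ≤ b l2)
    (hbsq : ∀ lam : ℕ, 1 ≤ lam → (lam : ℝ) ^ 2 ≤ b lam)
    (hQ : ∀ lam : ℕ, 1 ≤ lam → ∀ k : ℕ, a lam ≤ k → k < a (lam + 1) →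
      Q k = (k.factorial : ℝ) * (b lam) ^ k) :
    (∀ lam nu : ℕ, 1 ≤ lam → lam ≤ nu →
      (nu : ℝ) ≤ (Q (a nu) / M lam (a nu)) ^ ((1 : ℝ) / (a nu : ℝ))) ∧
    (∀ lam : ℕ, 1 ≤ lam →
      ¬ BddAbove (Set.range fun k : ℕ => (Q k / M lam k) ^ ((1 : ℝ) / (k : ℝ)))) :=
  stmt9_general M a b Q hMpos hMmono ha1 hamono hb hbsq hQ
end

section
/- Let F ⊆ ℝⁿ \ {0} be a nonempty open convex cone, and define Γ = {(x', y') ∈ ℝⁿ × ℝⁿ : (x' − y')·ξ > 0 for all ξ ∈ F}. Then the polar (dual) cone Γ° = {v ∈ ℝ^{2n} : y·v ≥ 0 for all y ∈ Γ} equals the closure of {(ξ, −ξ) : ξ ∈ F}. -/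
/-!
`Γ` is the preimage of the strict dual cone `D = {w | ∀ ξ ∈ F, 0 < ⟪ξ, w⟫}` under
`(x, y) ↦ x - y`, and `D` is nonempty by Hahn–Banach, since `F` is open, convex and misses `0`.
Testing a polar vector `v` against `(z + w₀, z)` with `w₀ ∈ D` and `z` arbitrary forces `v` to
be of the form `(a, -a)`; testing it against `(w, 0)` with `w ∈ D` puts `a` in the dual of `D`.
Since `D` is dense in the dual cone of `F`, the dual of `D` is the bidual of `F`, which is
`closure F` by the bipolar theorem.
-/

open Set Filter Topology ProperCone
open scoped RealInnerProductSpace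

lemma Convex.add_mem_of_forall_smul_mem {𝕜 M : Type*} [Field 𝕜] [LinearOrder 𝕜]
    [IsStrictOrderedRing 𝕜] [AddCommGroup M] [Module 𝕜 M] {s : Set M} (hs : Convex 𝕜 s)
    (hcone : ∀ c : 𝕜, 0 < c → ∀ x ∈ s, c • x ∈ s) {x y : M} (hx : x ∈ s) (hy : y ∈ s) :
    x + y ∈ s := by
  have hmid : (2⁻¹ : 𝕜) • x + (2⁻¹ : 𝕜) • y ∈ s :=
    hs hx hy (by positivity) (by positivity) (by ring)
  simpa [smul_add, smul_smul] using hcone 2 two_pos _ hmid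

lemma ConvexCone.zero_mem_closure {E : Type*} [AddCommGroup E] [Module ℝ E] [TopologicalSpace E]
    [ContinuousSMul ℝ E] (K : ConvexCone ℝ E) (hK : (K : Set E).Nonempty) :
    (0 : E) ∈ closure (K : Set E) := by
  obtain ⟨x, hx⟩ := hK
  have hlim : Tendsto (fun c : ℝ => c • x) (𝓝[>] 0) (𝓝 0) := by
    simpa using
      (tendsto_id.mono_left (nhdsWithin_le_nhds (a := (0 : ℝ)) (s := Ioi 0))).smul_const x
  exact mem_closure_of_tendsto hlim (eventually_mem_nhdsWithin.mono fun c hc => K.smul_mem hc hx)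

lemma closure_setOf_eq_pair_neg {X : Type*} [TopologicalSpace X] [AddGroup X] [ContinuousNeg X]
    [T2Space X] (s : Set X) :
    closure {p : X × X | ∃ ξ ∈ s, p = (ξ, -ξ)} = (fun ξ => (ξ, -ξ)) '' closure s := by
  have he : IsClosedEmbedding fun ξ : X => (ξ, -ξ) :=
    Function.LeftInverse.isClosedEmbedding (f := Prod.fst) (fun _ => rfl) continuous_fst
      (by fun_prop)
  rw [← he.closure_image_eq]
  congr 1
  ext p
  simp [eq_comm]

variable {E : Type*} [NormedAddCommGroup E] [InnerProductSpace ℝ E]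

def strictInnerDual (s : Set E) : Set E := {y | ∀ x ∈ s, 0 < ⟪x, y⟫}

lemma eq_zero_of_forall_le_inner {u : E} {c : ℝ} (h : ∀ z, c ≤ ⟪z, u⟫) : u = 0 := by
  by_contra hu
  have hpos : 0 < ⟪u, u⟫ := real_inner_self_pos.2 hu
  have := h (((c - 1) / ⟪u, u⟫) • u)
  rw [real_inner_smul_left, div_mul_cancel₀ _ hpos.ne'] at this
  linarith

variable [CompleteSpace E]

lemma strictInnerDual_nonempty_of_isOpen {s : Set E} (hopen : IsOpen s) (hconv : Convex ℝ s)
    (h0 : (0 : E) ∉ s) : (strictInnerDual s).Nonempty := by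
  obtain ⟨f, hf⟩ := geometric_hahn_banach_open_point hconv hopen h0
  refine ⟨-(InnerProductSpace.toDual ℝ E).symm f, fun x hx => ?_⟩
  rw [inner_neg_right, real_inner_comm, InnerProductSpace.toDual_symm_apply]
  simpa using hf x hx

lemma innerDual_subset_closure_strictInnerDual {s : Set E} (h : (strictInnerDual s).Nonempty) :
    (innerDual s : Set E) ⊆ closure (strictInnerDual s) := by
  obtain ⟨w₀, hw₀⟩ := h
  intro w hw
  have hlim : Tendsto (fun t : ℝ => w + t • w₀) (𝓝[>] 0) (𝓝 w) := by
    simpa using tendsto_const_nhds.add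
      ((tendsto_id.mono_left (nhdsWithin_le_nhds (a := (0 : ℝ)) (s := Ioi 0))).smul_const w₀)
  refine mem_closure_of_tendsto hlim (eventually_mem_nhdsWithin.mono fun t ht x hx => ?_)
  rw [inner_add_right, real_inner_smul_right]
  exact add_pos_of_nonneg_of_pos (hw hx) (mul_pos ht (hw₀ x hx))

lemma ProperCone.innerDual_closure (s : Set E) : innerDual (closure s) = innerDual s := by
  refine le_antisymm (innerDual_le_innerDual subset_closure) fun y hy x hx => ?_
  have hclosed : IsClosed {x : E | 0 ≤ ⟪x, y⟫} :=
    isClosed_le continuous_const (continuous_id.inner continuous_const)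
  exact closure_minimal (fun _ hx' => hy hx') hclosed hx

lemma ConvexCone.innerDual_innerDual (K : ConvexCone ℝ E) (hK : (K : Set E).Nonempty) :
    (innerDual (innerDual (K : Set E) : Set E) : Set E) = closure K := by
  let C : ProperCone ℝ E := ⟨K.closure.toPointedCone (K.zero_mem_closure hK), isClosed_closure⟩
  rw [← innerDual_closure (K : Set E)]
  exact congrArg SetLike.coe (ProperCone.innerDual_innerDual C)

lemma ConvexCone.innerDual_strictInnerDual_subset_closure (K : ConvexCone ℝ E)
    (hK : (K : Set E).Nonempty) (h : (strictInnerDual (K : Set E)).Nonempty) :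
    (innerDual (strictInnerDual (K : Set E)) : Set E) ⊆ closure K := by
  rw [← K.innerDual_innerDual hK, ← innerDual_closure (strictInnerDual _)]
  exact innerDual_le_innerDual (innerDual_subset_closure_strictInnerDual h)

/-- For a nonempty open convex cone `F ⊆ ℝⁿ \ {0}`, the dual cone of
`Γ = {(x',y') : (x'−y')·ξ > 0 ∀ ξ ∈ F}` is the closure of `{(ξ,−ξ) : ξ ∈ F}`. -/
theorem stmt14 (n : ℕ) (F : Set (EuclideanSpace ℝ (Fin n)))
    (hopen : IsOpen F) (hconv : Convex ℝ F) (hne : F.Nonempty)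
    (hcone : ∀ c : ℝ, 0 < c → ∀ x ∈ F, c • x ∈ F)
    (h0 : (0 : EuclideanSpace ℝ (Fin n)) ∉ F) :
    {v : EuclideanSpace ℝ (Fin n) × EuclideanSpace ℝ (Fin n) |
        ∀ y ∈ {p : EuclideanSpace ℝ (Fin n) × EuclideanSpace ℝ (Fin n) |
            ∀ ξ ∈ F, (0 : ℝ) < inner ℝ (p.1 - p.2) ξ},
          (0 : ℝ) ≤ inner ℝ y.1 v.1 + inner ℝ y.2 v.2} =
      closure {p : EuclideanSpace ℝ (Fin n) × EuclideanSpace ℝ (Fin n) |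
        ∃ ξ ∈ F, p = (ξ, -ξ)} := by
  let K : ConvexCone ℝ (EuclideanSpace ℝ (Fin n)) :=
    ⟨F, fun c hc x hx => hcone c hc x hx,
      fun _ hx _ hy => hconv.add_mem_of_forall_smul_mem hcone hx hy⟩
  have hstrict : ∀ w, (∀ ξ ∈ F, (0 : ℝ) < ⟪w, ξ⟫) ↔ w ∈ strictInnerDual F := fun w => by
    simp only [strictInnerDual, mem_ofPred_eq, real_inner_comm]
  obtain ⟨w₀, hw₀⟩ := strictInnerDual_nonempty_of_isOpen hopen hconv h0
  rw [closure_setOf_eq_pair_neg]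
  ext ⟨a, b⟩
  simp only [mem_ofPred_eq, mem_image, Prod.mk.injEq, Prod.forall]
  constructor
  · intro hv
    have hsum : a + b = 0 := by
      refine eq_zero_of_forall_le_inner (c := -⟪w₀, a⟫) fun z => ?_
      have := hv (z + w₀) z ((hstrict _).2 (by rwa [add_sub_cancel_left]))
      rw [inner_add_left] at this
      rw [inner_add_right]
      linarith
    have ha : a ∈ innerDual (strictInnerDual F) := fun w hw => by
      simpa using hv w 0 ((hstrict _).2 (by rwa [sub_zero]))
    exact ⟨a, K.innerDual_strictInnerDual_subset_closure hne ⟨w₀, hw₀⟩ ha, rfl,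
      neg_eq_of_add_eq_zero_right hsum⟩
  · rintro ⟨ξ, hξ, rfl, rfl⟩ x y hxy
    have hdual : x - y ∈ innerDual (closure F) := by
      rw [innerDual_closure]
      exact fun ζ hζ => (((hstrict _).1 hxy) ζ hζ).le
    have h : 0 ≤ ⟪ξ, x - y⟫ := hdual hξ
    rw [real_inner_comm, inner_sub_left] at h
    rw [inner_neg_right]
    linarith
end

section
/- Let 𝒩 be a Fréchet space, (p_k)_{k≥0} continuous seminorms on 𝒩, and (M^{(λ)})_{λ∈ℕ} a countable family of positive sequences. Suppose that for every u ∈ 𝒩 there exist r ∈ ℕ and λ ∈ ℕ with p_k(u) ≤ r^k M_k^{(λ)} for all k ≥ 0. Then there exist r₀ ∈ ℕ, λ₀ ∈ ℕ, and a continuous seminorm q on 𝒩 such that p_k(u) ≤ r₀^k M_k^{(λ₀)} q(u) for all u ∈ 𝒩 and all k ≥ 0. -/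
/-!
The sets `F r λ = {u | ∀ k, p k u ≤ r ^ k * M λ k}` are closed, convex and balanced, and by
hypothesis countably many of them cover the Fréchet space. By Baire's theorem one of them has
nonempty interior; being convex and balanced, it is then a neighbourhood of `0`, and its gauge
is a continuous seminorm `q` with `p k ≤ r ^ k * M λ k * q`.
-/

open Set Filter Topology

namespace Seminorm

variable {E : Type*} [AddCommGroup E] [Module ℝ E]

theorem le_mul_gauge_of_subset_closedBall (p : Seminorm ℝ E) {s : Set E} {c : ℝ}
    (hs : Absorbent ℝ s) (hsub : s ⊆ p.closedBall 0 c) (x : E) : p x ≤ c * gauge s x := by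
  have hc : 0 ≤ c := by simpa using hsub hs.zero_mem
  have hbound : ∀ a, gauge s x < a → p x ≤ c * a := by
    intro a ha
    obtain ⟨b, hb, hba, y, hy, rfl⟩ := exists_lt_of_gauge_lt hs ha
    calc p (b • y) = b * p y := by rw [map_smul_eq_mul, Real.norm_of_nonneg hb.le]
      _ ≤ b * c := by gcongr; exact (mem_closedBall_zero p).1 (hsub hy)
      _ ≤ c * a := by nlinarith
  exact ge_of_tendsto (x := 𝓝[>] gauge s x)
    ((continuous_const_mul c).tendsto _ |>.mono_left nhdsWithin_le_nhds)
    (eventually_nhdsWithin_of_forall hbound)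

end Seminorm

section TopologicalVectorSpace

variable {E : Type*} [AddCommGroup E] [Module ℝ E] [TopologicalSpace E]
  [IsTopologicalAddGroup E]

theorem Convex.mem_nhds_zero_of_balanced [ContinuousConstSMul ℝ E] {s : Set E} (hconv : Convex ℝ s) (hbal : Balanced ℝ s)
    (hne : (interior s).Nonempty) : s ∈ 𝓝 0 := by
  obtain ⟨x, hx⟩ := hne
  have hx' : -x ∈ interior s := by
    have := (Homeomorph.neg E).image_interior s
    simp only [Homeomorph.coe_neg, image_neg_eq_neg, hbal.neg_eq] at this
    rw [← this]
    exact neg_mem_neg.2 hx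
  have h0 := hconv.interior hx hx' one_half_pos.le one_half_pos.le (add_halves 1)
  rw [← smul_add, add_neg_cancel, smul_zero] at h0
  exact mem_interior_iff_mem_nhds.1 h0

theorem Seminorm.exists_continuous_forall_le_of_nonempty_interior_iInter_closedBall
    [ContinuousSMul ℝ E] {ι : Type*} (p : ι → Seminorm ℝ E) (c : ι → ℝ)
    (hne : (interior (⋂ i, (p i).closedBall 0 (c i))).Nonempty) :
    ∃ q : Seminorm ℝ E, Continuous q ∧ ∀ u i, p i u ≤ c i * q u := by
  set s := ⋂ i, (p i).closedBall 0 (c i)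
  have hconv : Convex ℝ s := convex_iInter fun i => (p i).convex_closedBall _ _
  have hbal : Balanced ℝ s := balanced_iInter fun i => (p i).balanced_closedBall_zero _
  have hs : s ∈ 𝓝 0 := hconv.mem_nhds_zero_of_balanced hbal hne
  have habs : Absorbent ℝ s := absorbent_nhds_zero hs
  exact ⟨gaugeSeminorm hbal hconv habs, continuous_gauge hconv hs,
    fun u i => (p i).le_mul_gauge_of_subset_closedBall habs (iInter_subset _ i) u⟩

end TopologicalVectorSpace

theorem stmt15_general (N : Type*) [AddCommGroup N] [Module ℝ N] [UniformSpace N]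
    [IsUniformAddGroup N] [ContinuousSMul ℝ N]
    [CompleteSpace N] [TopologicalSpace.MetrizableSpace N]
    (M : ℕ → ℕ → ℝ)
    (p : ℕ → Seminorm ℝ N) (hp : ∀ k : ℕ, Continuous fun u : N => p k u)
    (h : ∀ u : N, ∃ r : ℕ, ∃ lam : ℕ, ∀ k : ℕ, p k u ≤ (r : ℝ) ^ k * M lam k) :
    ∃ r0 : ℕ, ∃ lam0 : ℕ, ∃ q : Seminorm ℝ N, (Continuous fun u : N => q u) ∧
      ∀ u : N, ∀ k : ℕ, p k u ≤ (r0 : ℝ) ^ k * M lam0 k * q u := by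
  -- makes `N` completely metrizable, hence a Baire space
  have : (uniformity N).IsCountablyGenerated := by
    rw [uniformity_eq_comap_nhds_zero N]
    infer_instance
  let F : ℕ × ℕ → Set N := fun rl => ⋂ k, (p k).closedBall 0 ((rl.1 : ℝ) ^ k * M rl.2 k)
  have hclosed (rl : ℕ × ℕ) : IsClosed (F rl) := isClosed_iInter fun k => by
    rw [Seminorm.closedBall_zero_eq_preimage_closedBall]
    exact Metric.isClosed_closedBall.preimage (hp k)
  have hcover : ⋃ rl, F rl = univ := iUnion_eq_univ_iff.2 fun u =>
    let ⟨r, lam, hu⟩ := h u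
    ⟨(r, lam), mem_iInter.2 fun k => ((p k).mem_closedBall_zero).2 (hu k)⟩
  obtain ⟨⟨r0, lam0⟩, hne⟩ := nonempty_interior_of_iUnion_of_closed hclosed hcover
  obtain ⟨q, hq, hpq⟩ :=
    Seminorm.exists_continuous_forall_le_of_nonempty_interior_iInter_closedBall p _ hne
  exact ⟨r0, lam0, q, hq, hpq⟩

/-- Baire-category lemma in a Fréchet space: if each `u` satisfies
`p k u ≤ r^k M^{(λ)}_k` for some `r, λ`, then a single `r₀, λ₀` works uniformly,
up to a continuous seminorm factor. -/
theorem stmt15 (N : Type*) [AddCommGroup N] [Module ℝ N] [UniformSpace N]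
    [IsUniformAddGroup N] [ContinuousSMul ℝ N] [LocallyConvexSpace ℝ N]
    [CompleteSpace N] [TopologicalSpace.MetrizableSpace N]
    (M : ℕ → ℕ → ℝ) (hMpos : ∀ lam k : ℕ, 0 < M lam k)
    (p : ℕ → Seminorm ℝ N) (hp : ∀ k : ℕ, Continuous fun u : N => p k u)
    (h : ∀ u : N, ∃ r : ℕ, ∃ lam : ℕ, ∀ k : ℕ, p k u ≤ (r : ℝ) ^ k * M lam k) :
    ∃ r0 : ℕ, ∃ lam0 : ℕ, ∃ q : Seminorm ℝ N, (Continuous fun u : N => q u) ∧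
      ∀ u : N, ∀ k : ℕ, p k u ≤ (r0 : ℝ) ^ k * M lam0 k * q u :=
  stmt15_general N M p hp h
end
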